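/- Let μ ∈ ℂ, g ∈ SL(2,ℝ), and let φ, ψ be continuous functions on the unit circle S. Then ∫_S (π_μ⁻(g)φ)(s) · conj((π_{-conj(μ)-2}⁻(g)ψ)(s)) ds = ∫_S φ(s) · conj(ψ(s)) ds. In particular, if Re μ = -1 then ∫_S |(π_μ⁻(g)φ)(s)|² ds = ∫_S |φ(s)|² ds, i.e. π_μ⁻(g) preserves the L²(S) norm. -/

import Mathlib

open MeasureTheory Real Complex
open scoped Real

/-- The Euclidean norm on `ℝ²`. -/
noncomputable def vnorm (v : Fin 2 → ℝ) : ℝ := Real.sqrt (v 0 ^ 2 + v 1 ^ 2)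

/-- The arc-length parametrization `θ ↦ (cos θ, sin θ)` of the unit circle `S ⊂ ℝ²`. -/
noncomputable def circ (θ : ℝ) : Fin 2 → ℝ := ![Real.cos θ, Real.sin θ]

/-- The representation `π_μ⁻` of `SL(2,ℝ)` on functions on the circle:
`(π_μ⁻(g)φ)(s) = φ(g⁻¹.s) ‖g⁻¹·s‖^μ`. -/
noncomputable def piMinus (μ : ℂ) (g : Matrix.SpecialLinearGroup (Fin 2) ℝ)
    (φ : (Fin 2 → ℝ) → ℂ) : (Fin 2 → ℝ) → ℂ :=
  fun s =>
    φ ((vnorm ((g⁻¹).1.mulVec s))⁻¹ • (g⁻¹).1.mulVec s) *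
      ((vnorm ((g⁻¹).1.mulVec s) : ℂ)) ^ μ

lemma circ_continuous : Continuous circ := by
  apply continuous_pi
  intro i
  fin_cases i <;> simp [circ] <;> fun_prop

lemma vnorm_circ (θ : ℝ) : vnorm (circ θ) = 1 := by
  simp [vnorm, circ, Real.sin_sq_add_cos_sq, Real.cos_sq_add_sin_sq]

lemma core' (x y x' y' : ℝ → ℝ)
    (hx : ∀ θ, HasDerivAt x (x' θ) θ) (hy : ∀ θ, HasDerivAt y (y' θ) θ)
    (hW : ∀ θ, x θ * y' θ - x' θ * y θ = 1)
    (hpos : ∀ θ, 0 < x θ ^ 2 + y θ ^ 2)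
    (hperx : x (2*π) = x 0) (hpery : y (2*π) = y 0)
    (hinj : ∀ θ t : ℝ, 0 < t → 0 < θ → θ < 2*π → x θ = t * x 0 → y θ = t * y 0 → False)
    (F : (Fin 2 → ℝ) → ℂ) (hF : ContinuousOn F {v | vnorm v = 1}) :
    (∫ θ in (0:ℝ)..(2*π), ((x θ^2 + y θ^2 : ℝ):ℂ)⁻¹ *
        F ((Real.sqrt (x θ^2 + y θ^2))⁻¹ • ![x θ, y θ]))
      = ∫ θ in (0:ℝ)..(2*π), F (circ θ) := by
  have hxc : Continuous x := continuous_iff_continuousAt.2 fun θ => (hx θ).continuousAt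
  have hyc : Continuous y := continuous_iff_continuousAt.2 fun θ => (hy θ).continuousAt
  have hsne : ∀ θ, x θ ^ 2 + y θ ^ 2 ≠ 0 := fun θ => (hpos θ).ne'
  have hrpos : ∀ θ, 0 < Real.sqrt (x θ ^ 2 + y θ ^ 2) := fun θ => Real.sqrt_pos.2 (hpos θ)
  have hrne : ∀ θ, Real.sqrt (x θ ^ 2 + y θ ^ 2) ≠ 0 := fun θ => (hrpos θ).ne'
  have hrsq : ∀ θ, Real.sqrt (x θ ^ 2 + y θ ^ 2) ^ 2 = x θ ^ 2 + y θ ^ 2 :=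
    fun θ => Real.sq_sqrt (hpos θ).le
  have hwc : Continuous (fun θ => (x θ ^ 2 + y θ ^ 2)⁻¹) :=
    (((hxc.pow 2).add (hyc.pow 2)).inv₀ hsne)
  set u : ℝ → ℝ :=
    fun θ => Complex.arg (x 0 + y 0 * Complex.I) + ∫ t in (0:ℝ)..θ, (x t ^ 2 + y t ^ 2)⁻¹
    with hu_def
  have hu : ∀ θ, HasDerivAt u ((x θ ^ 2 + y θ ^ 2)⁻¹) θ := by
    intro θ
    exact (intervalIntegral.integral_hasDerivAt_right (hwc.intervalIntegrable 0 θ)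
      (hwc.stronglyMeasurableAtFilter _ _) hwc.continuousAt).const_add _
  -- z = x + y i in polar form
  have habs : ∀ θ, ‖(x θ + y θ * Complex.I : ℂ)‖ = Real.sqrt (x θ ^ 2 + y θ ^ 2) := by
    intro θ
    rw [Complex.norm_def, Complex.normSq_add_mul_I]
  have hzne : ∀ θ, (x θ + y θ * Complex.I : ℂ) ≠ 0 := by
    intro θ
    intro h
    have := habs θ
    rw [h] at this
    simp at this
    exact hrne θ this.symm
  have hq : ∀ θ, HasDerivAt (fun t => (x t + y t * Complex.I) /
      (Real.sqrt (x t ^ 2 + y t ^ 2) : ℂ) * Complex.exp (-(u t * Complex.I))) 0 θ := by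
    intro θ
    have hrne' : ((Real.sqrt (x θ ^ 2 + y θ ^ 2) : ℝ) : ℂ) ≠ 0 := by exact_mod_cast hrne θ
    have hs' : HasDerivAt (fun t => x t ^ 2 + y t ^ 2)
        (2 * x θ ^ 1 * x' θ + 2 * y θ ^ 1 * y' θ) θ := by
      exact (((hx θ).pow 2).add ((hy θ).pow 2))
    have hr' : HasDerivAt (fun t => Real.sqrt (x t ^ 2 + y t ^ 2))
        ((2 * x θ ^ 1 * x' θ + 2 * y θ ^ 1 * y' θ) / (2 * Real.sqrt (x θ ^ 2 + y θ ^ 2))) θ :=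
      hs'.sqrt (hsne θ)
    have hrC : HasDerivAt (fun t => ((Real.sqrt (x t ^ 2 + y t ^ 2) : ℝ) : ℂ))
        (((2 * x θ ^ 1 * x' θ + 2 * y θ ^ 1 * y' θ) / (2 * Real.sqrt (x θ ^ 2 + y θ ^ 2)) : ℝ) : ℂ)
        θ := hr'.ofReal_comp
    have hzC : HasDerivAt (fun t => ((x t : ℂ) + y t * Complex.I))
        ((x' θ : ℂ) + y' θ * Complex.I) θ :=
      ((hx θ).ofReal_comp).add (((hy θ).ofReal_comp).mul_const _)
    have hdiv := hzC.div hrC hrne'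
    have hexp : HasDerivAt (fun t => Complex.exp (-((u t : ℂ) * Complex.I)))
        (Complex.exp (-((u θ : ℂ) * Complex.I)) * (-((((x θ ^ 2 + y θ ^ 2)⁻¹ : ℝ) : ℂ) * Complex.I))) θ :=
      ((((hu θ).ofReal_comp).mul_const _).neg).cexp
    have hcomb := hdiv.mul hexp
    refine hcomb.congr_deriv (Eq.symm ?_)
    have hrC2 : ((Real.sqrt (x θ ^ 2 + y θ ^ 2) : ℝ) : ℂ) ^ 2 = (x θ : ℂ) ^ 2 + (y θ : ℂ) ^ 2 := by
      rw [← Complex.ofReal_pow, hrsq θ]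
      push_cast
      ring
    have hWc : (x θ : ℂ) * y' θ - (x' θ : ℂ) * y θ = 1 := by exact_mod_cast hW θ
    have hEne : Complex.exp (-((u θ : ℂ) * Complex.I)) ≠ 0 := Complex.exp_ne_zero _
    have hsC : ((x θ : ℂ) ^ 2 + (y θ : ℂ) ^ 2) ≠ 0 := by
      rw [← hrC2]; exact pow_ne_zero 2 hrne'
    rw [Pi.div_apply, show (((x θ ^ 2 + y θ ^ 2)⁻¹ : ℝ) : ℂ) =
        (((Real.sqrt (x θ ^ 2 + y θ ^ 2) : ℝ) : ℂ) ^ 2)⁻¹ by rw [hrC2]; push_cast; ring]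
    calc (0:ℂ) = Complex.exp (-((u θ : ℂ) * Complex.I)) /
          ((Real.sqrt (x θ ^ 2 + y θ ^ 2) : ℝ) : ℂ) ^ 3 *
          (((x' θ : ℂ) + (y' θ : ℂ) * Complex.I) *
              (((Real.sqrt (x θ ^ 2 + y θ ^ 2) : ℝ) : ℂ) ^ 2 - ((x θ : ℂ) ^ 2 + (y θ : ℂ) ^ 2)) +
            (Complex.I * (x θ : ℂ) - (y θ : ℂ)) * ((x θ : ℂ) * y' θ - (x' θ : ℂ) * y θ - 1)) := by
          rw [hrC2, hWc]; ring
      _ = _ := by push_cast; field_simp; linear_combination (↑(y θ) : ℂ) * Complex.I_sq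
  have hqconst : ∀ θ, (x θ + y θ * Complex.I) / (Real.sqrt (x θ ^ 2 + y θ ^ 2) : ℂ) *
      Complex.exp (-(u θ * Complex.I)) = (x 0 + y 0 * Complex.I) /
      (Real.sqrt (x 0 ^ 2 + y 0 ^ 2) : ℂ) * Complex.exp (-(u 0 * Complex.I)) :=
    fun θ => is_const_of_deriv_eq_zero (fun t => (hq t).differentiableAt)
      (fun t => (hq t).deriv) θ 0
  have hq0 : (x 0 + y 0 * Complex.I) / (Real.sqrt (x 0 ^ 2 + y 0 ^ 2) : ℂ) *
      Complex.exp (-(u 0 * Complex.I)) = 1 := by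
    have hu0 : u 0 = Complex.arg (x 0 + y 0 * Complex.I) := by
      simp [hu_def]
    have habsne : ((‖(x 0 + y 0 * Complex.I : ℂ)‖ : ℝ) : ℂ) ≠ 0 := by
      rw [habs 0]; exact_mod_cast hrne 0
    rw [hu0, ← habs 0, div_mul_eq_mul_div, div_eq_one_iff_eq habsne]
    conv_lhs => rw [← Complex.norm_mul_exp_arg_mul_I (x 0 + y 0 * Complex.I)]
    rw [mul_assoc, ← Complex.exp_add]
    simp
  have hz_eq : ∀ θ, (x θ + y θ * Complex.I : ℂ) =
      (Real.sqrt (x θ ^ 2 + y θ ^ 2) : ℂ) * Complex.exp (u θ * Complex.I) := by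
    intro θ
    have h := (hqconst θ).trans hq0
    have hEne : Complex.exp (-(u θ * Complex.I)) ≠ 0 := Complex.exp_ne_zero _
    have hrne' : ((Real.sqrt (x θ ^ 2 + y θ ^ 2) : ℝ) : ℂ) ≠ 0 := by
      exact_mod_cast hrne θ
    field_simp at h
    have h2 : (x θ + y θ * Complex.I) * (Complex.exp (-(u θ * Complex.I)) *
        Complex.exp (u θ * Complex.I)) =
        (Real.sqrt (x θ ^ 2 + y θ ^ 2) : ℂ) * Complex.exp (u θ * Complex.I) := by
      rw [← mul_assoc, mul_comm (↑(u θ) : ℂ) Complex.I, h]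
    simpa [← Complex.exp_add] using h2
  have hxu : ∀ θ, x θ = Real.sqrt (x θ ^ 2 + y θ ^ 2) * Real.cos (u θ) := by
    intro θ
    have h := hz_eq θ
    rw [Complex.exp_mul_I] at h
    have := congrArg Complex.re h
    simpa [Complex.cos_ofReal_re, Complex.sin_ofReal_re] using this
  have hyu : ∀ θ, y θ = Real.sqrt (x θ ^ 2 + y θ ^ 2) * Real.sin (u θ) := by
    intro θ
    have h := hz_eq θ
    rw [Complex.exp_mul_I] at h
    have := congrArg Complex.im h
    simpa [Complex.cos_ofReal_re, Complex.sin_ofReal_re] using this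
  have hcircu : ∀ θ, (Real.sqrt (x θ ^ 2 + y θ ^ 2))⁻¹ • ![x θ, y θ] = circ (u θ) := by
    intro θ
    funext i
    fin_cases i
    · simp only [Pi.smul_apply, Matrix.cons_val_zero, smul_eq_mul, circ]
      rw [inv_mul_eq_div, div_eq_iff (hrne θ)]
      exact (hxu θ).trans (mul_comm _ _)
    · simp only [Pi.smul_apply, Matrix.cons_val_one, Matrix.head_cons, smul_eq_mul, circ]
      rw [inv_mul_eq_div, div_eq_iff (hrne θ)]
      exact (hyu θ).trans (mul_comm _ _)
  have hGc : Continuous (fun v => F (circ v)) :=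
    hF.comp_continuous circ_continuous (fun v => vnorm_circ v)
  have hlhs : (∫ θ in (0:ℝ)..(2*π), ((x θ^2 + y θ^2 : ℝ):ℂ)⁻¹ *
        F ((Real.sqrt (x θ^2 + y θ^2))⁻¹ • ![x θ, y θ]))
      = ∫ θ in (0:ℝ)..(2*π), (x θ ^ 2 + y θ ^ 2)⁻¹ • ((fun v => F (circ v)) ∘ u) θ := by
    apply intervalIntegral.integral_congr
    intro θ _
    dsimp only
    rw [hcircu θ]
    simp [Complex.real_smul]
  rw [hlhs, intervalIntegral.integral_comp_smul_deriv (fun θ _ => hu θ)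
    hwc.continuousOn hGc]
  have hu2π : u (2*π) = u 0 + 2*π := by
    have hmono : StrictMono u := strictMono_of_deriv_pos (fun θ => by
      rw [(hu θ).deriv]; exact inv_pos.2 (hpos θ))
    have hucont : Continuous u := continuous_iff_continuousAt.2 fun t => (hu t).continuousAt
    have hE : Complex.exp (u 0 * Complex.I) = Complex.exp (u (2*π) * Complex.I) := by
      have h1 := hz_eq (2*π)
      rw [hperx, hpery] at h1
      rw [hz_eq 0] at h1
      exact mul_left_cancel₀ (by exact_mod_cast hrne 0) h1
    obtain ⟨n, hn⟩ := Complex.exp_eq_exp_iff_exists_int.1 hE.symm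
    have hnr : u (2*π) = u 0 + n * (2*π) := by
      have h2 := congrArg Complex.im hn
      simpa using h2
    have hΔ : 0 < u (2*π) - u 0 := sub_pos.2 (hmono (by positivity))
    have hn1 : (1:ℤ) ≤ n := by
      by_contra hcon
      push_neg at hcon
      have h3 : (n:ℝ) ≤ 0 := by exact_mod_cast Int.lt_add_one_iff.1 hcon
      nlinarith [Real.pi_pos]
    by_contra hne
    have hn2 : (2:ℝ) ≤ (n:ℝ) := by
      have h4 : n ≠ 1 := by
        rintro rfl
        apply hne
        rw [hnr]; push_cast; ring
      exact_mod_cast (by omega : (2:ℤ) ≤ n)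
    have hlt : u 0 + 2*π < u (2*π) := by
      rw [hnr]; nlinarith [Real.pi_pos]
    obtain ⟨θ₂, hθ₂mem, hθ₂⟩ := intermediate_value_Ioo (by positivity : (0:ℝ) ≤ 2*π)
      hucont.continuousOn (Set.mem_Ioo.2 ⟨by nlinarith [Real.pi_pos], hlt⟩)
    have hEθ : Complex.exp (u θ₂ * Complex.I) = Complex.exp (u 0 * Complex.I) := by
      rw [hθ₂]
      push_cast
      rw [add_mul, Complex.exp_add]
      simp [Complex.exp_two_pi_mul_I]
    have hr0ne : ((Real.sqrt (x 0 ^ 2 + y 0 ^ 2) : ℝ) : ℂ) ≠ 0 := by exact_mod_cast hrne 0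
    have ht : (x θ₂ + y θ₂ * Complex.I : ℂ) =
        ((Real.sqrt (x θ₂ ^ 2 + y θ₂ ^ 2) / Real.sqrt (x 0 ^ 2 + y 0 ^ 2) : ℝ) : ℂ) *
          (x 0 + y 0 * Complex.I) := by
      rw [hz_eq θ₂, hEθ, hz_eq 0]
      push_cast
      field_simp
    have htpos : 0 < Real.sqrt (x θ₂ ^ 2 + y θ₂ ^ 2) / Real.sqrt (x 0 ^ 2 + y 0 ^ 2) :=
      div_pos (hrpos θ₂) (hrpos 0)
    have hx2 : x θ₂ = (Real.sqrt (x θ₂ ^ 2 + y θ₂ ^ 2) / Real.sqrt (x 0 ^ 2 + y 0 ^ 2)) * x 0 := by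
      have := congrArg Complex.re ht
      simpa using this
    have hy2 : y θ₂ = (Real.sqrt (x θ₂ ^ 2 + y θ₂ ^ 2) / Real.sqrt (x 0 ^ 2 + y 0 ^ 2)) * y 0 := by
      have := congrArg Complex.im ht
      simpa using this
    exact hinj θ₂ _ htpos hθ₂mem.1 hθ₂mem.2 hx2 hy2
  rw [hu2π]
  have hper : Function.Periodic (fun v => F (circ v)) (2*π) := by
    intro v
    have : circ (v + 2*π) = circ v := by
      funext i
      fin_cases i <;> simp [circ, Real.cos_add_two_pi, Real.sin_add_two_pi]
    simp [this]
  simpa using hper.intervalIntegral_add_eq (u 0) 0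

lemma core (a b c d : ℝ) (hdet : a * d - b * c = 1) (F : (Fin 2 → ℝ) → ℂ)
    (hF : ContinuousOn F {v | vnorm v = 1}) :
    (∫ θ in (0:ℝ)..(2*π),
      (((a * Real.cos θ + b * Real.sin θ)^2 + (c * Real.cos θ + d * Real.sin θ)^2 : ℝ) : ℂ)⁻¹ *
        F ((Real.sqrt ((a * Real.cos θ + b * Real.sin θ)^2 + (c * Real.cos θ + d * Real.sin θ)^2))⁻¹ •
            ![a * Real.cos θ + b * Real.sin θ, c * Real.cos θ + d * Real.sin θ]))
      = ∫ θ in (0:ℝ)..(2*π), F (circ θ) := by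
  refine core' (fun θ => a * Real.cos θ + b * Real.sin θ)
    (fun θ => c * Real.cos θ + d * Real.sin θ)
    (fun θ => -(a * Real.sin θ) + b * Real.cos θ)
    (fun θ => -(c * Real.sin θ) + d * Real.cos θ)
    ?_ ?_ ?_ ?_ ?_ ?_ ?_ F hF
  · intro θ
    have h := ((Real.hasDerivAt_cos θ).const_mul a).add ((Real.hasDerivAt_sin θ).const_mul b)
    exact h.congr_deriv (by ring)
  · intro θ
    have h := ((Real.hasDerivAt_cos θ).const_mul c).add ((Real.hasDerivAt_sin θ).const_mul d)
    exact h.congr_deriv (by ring)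
  · intro θ
    linear_combination (Real.sin θ^2 + Real.cos θ^2) * hdet + Real.sin_sq_add_cos_sq θ
  · intro θ
    by_contra h
    push_neg at h
    have h1 : a * Real.cos θ + b * Real.sin θ = 0 := by nlinarith [sq_nonneg (a * Real.cos θ + b * Real.sin θ), sq_nonneg (c * Real.cos θ + d * Real.sin θ)]
    have h2 : c * Real.cos θ + d * Real.sin θ = 0 := by nlinarith [sq_nonneg (a * Real.cos θ + b * Real.sin θ), sq_nonneg (c * Real.cos θ + d * Real.sin θ)]
    have hc : Real.cos θ = 0 := by linear_combination d * h1 - b * h2 - Real.cos θ * hdet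
    have hs : Real.sin θ = 0 := by linear_combination (-c) * h1 + a * h2 - Real.sin θ * hdet
    have := Real.sin_sq_add_cos_sq θ
    rw [hc, hs] at this
    norm_num at this
  · simp
  · simp
  · intro θ t ht hθ0 hθ2 hx2 hy2
    simp only [Real.cos_zero, Real.sin_zero, mul_one, mul_zero, add_zero] at hx2 hy2
    have hc : Real.cos θ = t := by
      linear_combination d * hx2 - b * hy2 - (Real.cos θ - t) * hdet
    have hs : Real.sin θ = 0 := by
      linear_combination (-c) * hx2 + a * hy2 - Real.sin θ * hdet
    have h5 : t ^ 2 = 1 := by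
      linear_combination Real.sin_sq_add_cos_sq θ - Real.sin θ * hs - (Real.cos θ + t) * hc
    have h6 : (t - 1) * (t + 1) = 0 := by linear_combination h5
    have ht1 : t = 1 := by
      rcases mul_eq_zero.1 h6 with h | h
      · linarith
      · linarith
    have hc1 : Real.cos θ = 1 := by rw [hc, ht1]
    have hθ0' : θ = 0 := by
      have hpi := Real.pi_pos
      exact (Real.cos_eq_one_iff_of_lt_of_lt (by linarith) (by linarith)).1 hc1
    linarith


lemma cpow_mul_conj_cpow (r : ℝ) (hr : 0 < r) (μ : ℂ) :
    (r:ℂ) ^ μ * (starRingEnd ℂ) ((r:ℂ) ^ (-(starRingEnd ℂ) μ - 2)) = ((r^2 : ℝ):ℂ)⁻¹ := by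
  have hrne : (r:ℂ) ≠ 0 := by exact_mod_cast hr.ne'
  have hν : (starRingEnd ℂ) (-(starRingEnd ℂ) μ - 2) = -μ - 2 := by
    rw [map_sub, map_neg, Complex.conj_conj, Complex.conj_ofNat]
  have hconj : (starRingEnd ℂ) ((r:ℂ) ^ (-(starRingEnd ℂ) μ - 2)) = (r:ℂ) ^ (-μ - 2) := by
    rw [Complex.cpow_def_of_ne_zero hrne, Complex.cpow_def_of_ne_zero hrne, ← Complex.exp_conj,
      ← Complex.ofReal_log hr.le, map_mul, Complex.conj_ofReal, hν]
  rw [hconj, ← Complex.cpow_add _ _ hrne]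
  have h2 : μ + (-μ - 2) = ((-2 : ℤ) : ℂ) := by push_cast; ring
  rw [h2, Complex.cpow_intCast, zpow_neg, Complex.ofReal_pow]
  norm_cast

lemma pairing (μ : ℂ) (g : Matrix.SpecialLinearGroup (Fin 2) ℝ)
    (φ ψ : (Fin 2 → ℝ) → ℂ)
    (hφ : ContinuousOn φ {v | vnorm v = 1}) (hψ : ContinuousOn ψ {v | vnorm v = 1}) :
    (∫ θ in (0 : ℝ)..(2 * π),
        piMinus μ g φ (circ θ) *
          (starRingEnd ℂ) (piMinus (-(starRingEnd ℂ μ) - 2) g ψ (circ θ)))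
      = (∫ θ in (0 : ℝ)..(2 * π), φ (circ θ) * (starRingEnd ℂ) (ψ (circ θ))) := by
  set M : Matrix (Fin 2) (Fin 2) ℝ := (g⁻¹).1 with hM
  have hdet : M 0 0 * M 1 1 - M 0 1 * M 1 0 = 1 := by
    have h := (g⁻¹).2
    rwa [Matrix.det_fin_two] at h
  have hmv : ∀ θ : ℝ, M.mulVec (circ θ) =
      ![M 0 0 * Real.cos θ + M 0 1 * Real.sin θ, M 1 0 * Real.cos θ + M 1 1 * Real.sin θ] := by
    intro θ
    funext i
    fin_cases i <;>
      simp [Matrix.mulVec, dotProduct, Fin.sum_univ_two, circ]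
  have hvn : ∀ θ : ℝ, vnorm (M.mulVec (circ θ)) =
      Real.sqrt ((M 0 0 * Real.cos θ + M 0 1 * Real.sin θ)^2 +
        (M 1 0 * Real.cos θ + M 1 1 * Real.sin θ)^2) := by
    intro θ
    rw [hmv θ, vnorm]
    simp
  have hspos : ∀ θ : ℝ, 0 < (M 0 0 * Real.cos θ + M 0 1 * Real.sin θ)^2 +
      (M 1 0 * Real.cos θ + M 1 1 * Real.sin θ)^2 := by
    intro θ
    by_contra h
    push_neg at h
    have h1 : M 0 0 * Real.cos θ + M 0 1 * Real.sin θ = 0 := by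
      nlinarith [sq_nonneg (M 0 0 * Real.cos θ + M 0 1 * Real.sin θ),
        sq_nonneg (M 1 0 * Real.cos θ + M 1 1 * Real.sin θ)]
    have h2 : M 1 0 * Real.cos θ + M 1 1 * Real.sin θ = 0 := by
      nlinarith [sq_nonneg (M 0 0 * Real.cos θ + M 0 1 * Real.sin θ),
        sq_nonneg (M 1 0 * Real.cos θ + M 1 1 * Real.sin θ)]
    have hc : Real.cos θ = 0 := by
      linear_combination M 1 1 * h1 - M 0 1 * h2 - Real.cos θ * hdet
    have hs : Real.sin θ = 0 := by
      linear_combination (-(M 1 0)) * h1 + M 0 0 * h2 - Real.sin θ * hdet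
    have hpy := Real.sin_sq_add_cos_sq θ
    rw [hc, hs] at hpy
    norm_num at hpy
  have hFcont : ContinuousOn (fun v => φ v * (starRingEnd ℂ) (ψ v)) {v | vnorm v = 1} := by
    apply hφ.mul
    exact Complex.continuous_conj.comp_continuousOn hψ
  have key : ∀ θ ∈ Set.uIcc (0:ℝ) (2*π),
      (fun θ => piMinus μ g φ (circ θ) *
        (starRingEnd ℂ) (piMinus (-(starRingEnd ℂ μ) - 2) g ψ (circ θ))) θ =
      (fun θ =>
        (((M 0 0 * Real.cos θ + M 0 1 * Real.sin θ)^2 +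
            (M 1 0 * Real.cos θ + M 1 1 * Real.sin θ)^2 : ℝ) : ℂ)⁻¹ *
          ((fun v => φ v * (starRingEnd ℂ) (ψ v))
            ((Real.sqrt ((M 0 0 * Real.cos θ + M 0 1 * Real.sin θ)^2 +
                (M 1 0 * Real.cos θ + M 1 1 * Real.sin θ)^2))⁻¹ •
              ![M 0 0 * Real.cos θ + M 0 1 * Real.sin θ,
                M 1 0 * Real.cos θ + M 1 1 * Real.sin θ]))) θ := by
    intro θ _
    dsimp only
    rw [piMinus, piMinus]
    rw [← hM, hvn θ, hmv θ, map_mul]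
    set r : ℝ := Real.sqrt ((M 0 0 * Real.cos θ + M 0 1 * Real.sin θ)^2 +
        (M 1 0 * Real.cos θ + M 1 1 * Real.sin θ)^2) with hr
    have hrpos : 0 < r := Real.sqrt_pos.2 (hspos θ)
    have hrsq : r ^ 2 = (M 0 0 * Real.cos θ + M 0 1 * Real.sin θ)^2 +
        (M 1 0 * Real.cos θ + M 1 1 * Real.sin θ)^2 := Real.sq_sqrt (hspos θ).le
    calc φ (r⁻¹ • ![M 0 0 * Real.cos θ + M 0 1 * Real.sin θ,
            M 1 0 * Real.cos θ + M 1 1 * Real.sin θ]) * (r:ℂ) ^ μ *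
          ((starRingEnd ℂ) (ψ (r⁻¹ • ![M 0 0 * Real.cos θ + M 0 1 * Real.sin θ,
            M 1 0 * Real.cos θ + M 1 1 * Real.sin θ])) *
            (starRingEnd ℂ) ((r:ℂ) ^ (-(starRingEnd ℂ μ) - 2)))
        = ((r:ℂ) ^ μ * (starRingEnd ℂ) ((r:ℂ) ^ (-(starRingEnd ℂ μ) - 2))) *
          (φ (r⁻¹ • ![M 0 0 * Real.cos θ + M 0 1 * Real.sin θ,
            M 1 0 * Real.cos θ + M 1 1 * Real.sin θ]) *
          (starRingEnd ℂ) (ψ (r⁻¹ • ![M 0 0 * Real.cos θ + M 0 1 * Real.sin θ,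
            M 1 0 * Real.cos θ + M 1 1 * Real.sin θ]))) := by ring
      _ = _ := by
        rw [cpow_mul_conj_cpow r hrpos μ, hrsq]
  rw [intervalIntegral.integral_congr key]
  exact core (M 0 0) (M 0 1) (M 1 0) (M 1 1) hdet _ hFcont

/-- The pairing `(φ,ψ) = ∫_S φ ψ̄ ds` is invariant under `(π_μ⁻, π_{-μ̄-2}⁻)`; in
particular for `Re μ = -1` the representation `π_μ⁻` preserves the `L²(S)` norm. -/
theorem piMinus_pairing_invariance (μ : ℂ) (g : Matrix.SpecialLinearGroup (Fin 2) ℝ)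
    (φ ψ : (Fin 2 → ℝ) → ℂ)
    (hφ : ContinuousOn φ {v | vnorm v = 1}) (hψ : ContinuousOn ψ {v | vnorm v = 1}) :
    (∫ θ in (0 : ℝ)..(2 * π),
        piMinus μ g φ (circ θ) *
          (starRingEnd ℂ) (piMinus (-(starRingEnd ℂ μ) - 2) g ψ (circ θ)))
      = (∫ θ in (0 : ℝ)..(2 * π), φ (circ θ) * (starRingEnd ℂ) (ψ (circ θ))) ∧
    (μ.re = -1 →
      (∫ θ in (0 : ℝ)..(2 * π), ‖piMinus μ g φ (circ θ)‖ ^ 2)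
        = ∫ θ in (0 : ℝ)..(2 * π), ‖φ (circ θ)‖ ^ 2) := by
  constructor
  · exact pairing μ g φ ψ hφ hψ
  · intro hre
    have hμ : -(starRingEnd ℂ) μ - 2 = μ := by
      apply Complex.ext
      · simp [hre]
        norm_num
      · simp
    have h1 := pairing μ g φ φ hφ hφ
    rw [hμ] at h1
    have h2 : ∀ (f : (Fin 2 → ℝ) → ℂ),
        (∫ θ in (0:ℝ)..(2*π), f (circ θ) * (starRingEnd ℂ) (f (circ θ)))
          = ((∫ θ in (0:ℝ)..(2*π), ‖f (circ θ)‖ ^ 2 : ℝ) : ℂ) := by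
      intro f
      rw [← intervalIntegral.integral_ofReal]
      apply intervalIntegral.integral_congr
      intro θ _
      dsimp only
      rw [Complex.mul_conj]
      norm_cast
      rw [Complex.sq_norm]
    apply Complex.ofReal_injective
    rw [← h2 (piMinus μ g φ), ← h2 φ]
    exact h1
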